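/- arXiv:1607.08899 — 2 statements merged into one kernel-verified Lean document; each statement's English description precedes it below -/
import Mathlib

section
/- Let X be a proper geodesic metric space, e ∈ X, N a Morse gauge, and let γ_x, γ_y : [0,∞) → X be N-Morse geodesic rays with γ_x(0) = γ_y(0) = e. Suppose R ∈ ℕ satisfies d(γ_x(R), γ_y(t)) > 4·N(3,0) for all t ≥ 0. For each n > R let γ_n be a geodesic from γ_x(n) to γ_y(n). Then some subsequence of (γ_n) converges uniformly on compact sets to a biinfinite geodesic γ : ℝ → X, and γ is contained in the 4·N(3,0)-neighborhood of γ_x ∪ γ_y. -/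
open Set Metric Filter

/-- A map is a geodesic on the interval `I`: distances equal parameter differences. -/
def IsGeodesicOn {X : Type*} [MetricSpace X] (γ : ℝ → X) (I : Set ℝ) : Prop :=
  ∀ s ∈ I, ∀ t ∈ I, dist (γ s) (γ t) = |s - t|

/-- A `(K,C)`-quasigeodesic on the interval `I`. -/
def IsQuasigeodesicOn {X : Type*} [MetricSpace X] (K C : ℝ) (q : ℝ → X) (I : Set ℝ) : Prop :=
  ∀ s ∈ I, ∀ t ∈ I,
    (1 / K) * |s - t| - C ≤ dist (q s) (q t) ∧ dist (q s) (q t) ≤ K * |s - t| + C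

/-- The closed `r`-neighborhood of a subset. -/
def nbhd {X : Type*} [MetricSpace X] (A : Set X) (r : ℝ) : Set X :=
  {x | ∃ y ∈ A, dist x y ≤ r}

/-- A path `γ` (on domain `I`) is `N`-Morse: every `(K,C)`-quasigeodesic with endpoints
on `γ` lies in the `N K C`-neighborhood of `γ`. -/
def IsMorseOn {X : Type*} [MetricSpace X] (N : ℝ → ℝ → ℝ) (γ : ℝ → X) (I : Set ℝ) : Prop :=
  ∀ K C : ℝ, 1 ≤ K → 0 ≤ C → ∀ (q : ℝ → X) (a b : ℝ), a ≤ b →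
    IsQuasigeodesicOn K C q (Icc a b) → q a ∈ γ '' I → q b ∈ γ '' I →
    q '' Icc a b ⊆ nbhd (γ '' I) (N K C)

/-- A Morse gauge takes nonnegative values. -/
def MorseGauge (N : ℝ → ℝ → ℝ) : Prop := ∀ K C : ℝ, 1 ≤ K → 0 ≤ C → 0 ≤ N K C

/-- A geodesic metric space: any two points are joined by a geodesic. -/
def GeodesicSpace (X : Type*) [MetricSpace X] : Prop :=
  ∀ x y : X, ∃ γ : ℝ → X, IsGeodesicOn γ (Icc 0 (dist x y)) ∧ γ 0 = x ∧ γ (dist x y) = y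

/-!
For each `n`, let `σ c` be the point of `γn n` closest to `e` and `η` a geodesic from `e` to
`σ c`. Following `η` by either half of `γn n` gives a `(3,0)`-quasigeodesic with endpoints on one
of the rays, so `γn n` and `η` stay `N 3 0`-close to `γx ∪ γy`. If `η` were longer than `R`, its
point `η R` would be `N 3 0`-close to both rays, contradicting the divergence hypothesis. Hence
`γn n`, recentered at `c`, passes within `R` of `e` and extends at least `n - R` on both sides, and
Arzelà–Ascoli gives a subsequence converging uniformly on compacta to a biinfinite geodesic, which
stays in the closed `N 3 0`-neighborhood of the rays.
-/

open scoped Topology NNReal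

section

variable {X : Type*} [MetricSpace X]

lemma nbhd_mono {A B : Set X} {r s : ℝ} (hAB : A ⊆ B) (hrs : r ≤ s) : nbhd A r ⊆ nbhd B s :=
  fun _ ⟨y, hy, hd⟩ => ⟨y, hAB hy, hd.trans hrs⟩

lemma IsClosed.nbhd [ProperSpace X] {A : Set X} (hA : IsClosed A) (r : ℝ) :
    IsClosed (nbhd A r) := by
  rcases A.eq_empty_or_nonempty with rfl | hne
  · simp [_root_.nbhd]
  have : _root_.nbhd A r = {x | infDist x A ≤ r} := by
    ext x
    refine ⟨fun ⟨y, hy, hd⟩ => (infDist_le_dist_of_mem hy).trans hd, fun h => ?_⟩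
    obtain ⟨y, hy, hxy⟩ := hA.exists_infDist_eq_dist hne x
    exact ⟨y, hy, hxy ▸ h⟩
  exact this ▸ _root_.isClosed_le (continuous_infDist_pt A) continuous_const

namespace IsGeodesicOn

variable {γ : ℝ → X} {I : Set ℝ}

lemma dist_eq_sub (h : IsGeodesicOn γ I) {s t : ℝ} (hs : s ∈ I) (ht : t ∈ I) (hst : s ≤ t) :
    dist (γ s) (γ t) = t - s := by
  rw [h s hs t ht, abs_of_nonpos (by linarith), neg_sub]

lemma congr {γ' : ℝ → X} (h : IsGeodesicOn γ I) (hγ : EqOn γ γ' I) : IsGeodesicOn γ' I :=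
  fun s hs t ht => by rw [← hγ hs, ← hγ ht, h s hs t ht]

lemma comp {f : ℝ → ℝ} {J : Set ℝ} (h : IsGeodesicOn γ I) (hf : ∀ s t, |f s - f t| = |s - t|)
    (hJ : MapsTo f J I) : IsGeodesicOn (γ ∘ f) J :=
  fun s hs t ht => by rw [Function.comp_apply, Function.comp_apply, h _ (hJ hs) _ (hJ ht), hf]

lemma lipschitzOnWith (h : IsGeodesicOn γ I) : LipschitzOnWith 1 γ I :=
  LipschitzOnWith.of_dist_le_mul fun s hs t ht => by simp [h s hs t ht, Real.dist_eq]

lemma lipschitzWith_projIcc {a b : ℝ} (h : IsGeodesicOn γ (Icc a b)) (hab : a ≤ b) :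
    LipschitzWith 1 (fun s => γ (projIcc a b hab s)) :=
  LipschitzWith.of_dist_le_mul fun s t => by
    rw [h _ (projIcc a b hab s).2 _ (projIcc a b hab t).2, NNReal.coe_one, one_mul,
      Real.dist_eq]
    exact abs_projIcc_sub_projIcc hab

lemma isClosed_image (h : IsGeodesicOn γ I) (hI : IsClosed I) : IsClosed (γ '' I) := by
  have : CompleteSpace I := hI.completeSpace_coe
  have hiso : Isometry (I.domRestrict γ) :=
    Isometry.of_dist_eq fun s t => by simp [Subtype.dist_eq, Real.dist_eq, h s s.2 t t.2]
  simpa [range_domRestrict] using hiso.isClosedEmbedding.isClosed_range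

end IsGeodesicOn

lemma isQuasigeodesicOn_three_zero_of_dist_le {q : ℝ → X} {a b d : ℝ}
    (h₁ : IsGeodesicOn q (Icc a b)) (h₂ : IsGeodesicOn q (Icc b d))
    (hmin : ∀ t ∈ Icc b d, b - a ≤ dist (q a) (q t)) : IsQuasigeodesicOn 3 0 q (Icc a d) := by
  intro s hs t ht
  wlog hst : s ≤ t generalizing s t
  · simpa only [dist_comm, abs_sub_comm] using this t ht s hs (le_of_not_ge hst)
  rw [abs_of_nonpos (sub_nonpos.2 hst), neg_sub]
  rcases le_total t b with htb | hbt
  · rw [h₁.dist_eq_sub ⟨hs.1, hst.trans htb⟩ ⟨hs.1.trans hst, htb⟩ hst]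
    constructor <;> linarith
  rcases le_total b s with hbs | hsb
  · rw [h₂.dist_eq_sub ⟨hbs, hst.trans ht.2⟩ ⟨hbt, ht.2⟩ hst]
    constructor <;> linarith
  have hsb' : s ∈ Icc a b := ⟨hs.1, hsb⟩
  have hb₁ : b ∈ Icc a b := ⟨hs.1.trans hsb, le_rfl⟩
  have hb₂ : b ∈ Icc b d := ⟨le_rfl, hbt.trans ht.2⟩
  have hsb_dist := h₁.dist_eq_sub hsb' hb₁ hsb
  have has_dist := h₁.dist_eq_sub ⟨le_rfl, hs.1.trans hsb⟩ hsb' hs.1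
  have hbt_dist := h₂.dist_eq_sub hb₂ ⟨hbt, ht.2⟩ hbt
  -- `dist (q s) (q t)` is at least `b - s` and at least `(t - b) - (b - s)`
  constructor <;> linarith [hmin t ⟨hbt, ht.2⟩, dist_triangle (q a) (q s) (q t),
    dist_triangle (q b) (q s) (q t), dist_triangle (q s) (q b) (q t), dist_comm (q b) (q s)]

/-- The concatenation of `η` and `τ` is a `(3,0)`-quasigeodesic because `τ 0` is a point of `τ`
closest to `η 0`. -/
lemma IsMorseOn.image_concat_subset_nbhd {N : ℝ → ℝ → ℝ} {γ η τ : ℝ → X} {I : Set ℝ}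
    (hM : IsMorseOn N γ I) {m l : ℝ} (hm : 0 ≤ m) (hl : 0 ≤ l)
    (hη : IsGeodesicOn η (Icc 0 m)) (hτ : IsGeodesicOn τ (Icc 0 l)) (hητ : τ 0 = η m)
    (hmin : ∀ t ∈ Icc 0 l, dist (η 0) (η m) ≤ dist (η 0) (τ t))
    (hη0 : η 0 ∈ γ '' I) (hτl : τ l ∈ γ '' I) :
    η '' Icc 0 m ∪ τ '' Icc 0 l ⊆ nbhd (γ '' I) (N 3 0) := by
  set q : ℝ → X := fun r => if r ≤ m then η r else τ (r - m)
  have hqη : EqOn η q (Icc 0 m) := fun r hr => (if_pos hr.2).symm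
  have hqτ : EqOn (τ ∘ (· - m)) q (Icc m (m + l)) := fun r hr => by
    rcases hr.1.eq_or_lt with rfl | hmr
    · simp [q, hητ]
    · exact (if_neg hmr.not_ge).symm
  have hq : IsQuasigeodesicOn 3 0 q (Icc 0 (m + l)) := by
    refine isQuasigeodesicOn_three_zero_of_dist_le (hη.congr hqη) ?_ fun t ht => ?_
    · exact (hτ.comp (fun s t => by ring_nf)
        fun r hr => ⟨by linarith [hr.1], by linarith [hr.2]⟩).congr hqτ
    · rw [← hqη ⟨le_rfl, hm⟩, ← hqτ ht, ← hη.dist_eq_sub ⟨le_rfl, hm⟩ ⟨hm, le_rfl⟩ hm]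
      exact hmin _ ⟨by linarith [ht.1], by linarith [ht.2]⟩
  have hsub := hM 3 0 (by norm_num) le_rfl q 0 (m + l) (by linarith) hq
    (hqη ⟨le_rfl, hm⟩ ▸ hη0) (by simpa [← hqτ ⟨by linarith, le_rfl⟩] using hτl)
  rintro _ (⟨r, hr, rfl⟩ | ⟨r, hr, rfl⟩)
  · exact hqη hr ▸ hsub ⟨r, ⟨hr.1, by linarith [hr.2]⟩, rfl⟩
  · have := hqτ (x := r + m) ⟨by linarith [hr.1], by linarith [hr.2]⟩
    simp only [Function.comp_apply, add_sub_cancel_right] at this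
    exact this ▸ hsub ⟨r + m, ⟨by linarith [hr.1], by linarith [hr.2]⟩, rfl⟩

lemma IsGeodesicOn.dist_le_of_mem_nbhd {γ : ℝ → X} (hγ : IsGeodesicOn γ (Ici 0)) {p : X} {D : ℝ}
    (hp : p ∈ nbhd (γ '' Ici 0) D) : dist (γ (dist (γ 0) p)) p ≤ 2 * D := by
  obtain ⟨_, ⟨s, hs, rfl⟩, hps⟩ := hp
  have hγs : dist (γ 0) (γ s) = s := hγ.dist_eq_sub self_mem_Ici hs hs |>.trans (sub_zero s)
  have hsp : |s - dist (γ 0) p| ≤ D := by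
    rw [abs_le]
    constructor <;> linarith [dist_triangle (γ 0) (γ s) p, dist_triangle (γ 0) p (γ s),
      dist_comm p (γ s)]
  calc dist (γ (dist (γ 0) p)) p ≤ dist (γ (dist (γ 0) p)) (γ s) + dist (γ s) p :=
        dist_triangle _ _ _
    _ ≤ D + D := by
        rw [hγ _ dist_nonneg _ hs, abs_sub_comm, dist_comm (γ s)]
        exact add_le_add hsp hps
    _ = 2 * D := by ring

lemma exists_center_of_diverging_isMorseOn {N : ℝ → ℝ → ℝ} {γx γy : ℝ → X} (hX : GeodesicSpace X)
    (hγx : IsGeodesicOn γx (Ici 0)) (hγy : IsGeodesicOn γy (Ici 0))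
    (hMx : IsMorseOn N γx (Ici 0)) (hMy : IsMorseOn N γy (Ici 0)) (hxy : γx 0 = γy 0)
    {R : ℝ} (hR0 : 0 ≤ R) (hR : ∀ t, 0 ≤ t → 3 * N 3 0 < dist (γx R) (γy t))
    {n L : ℝ} (hn : 0 ≤ n) (hL : 0 ≤ L) {σ : ℝ → X} (hσ : IsGeodesicOn σ (Icc 0 L))
    (hσ0 : σ 0 = γx n) (hσL : σ L = γy n) :
    ∃ c, dist (γx 0) (σ c) ≤ R ∧ n - R ≤ c ∧ n - R ≤ L - c ∧
      σ '' Icc 0 L ⊆ nbhd (γx '' Ici 0 ∪ γy '' Ici 0) (N 3 0) := by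
  obtain ⟨c, hc, hcmin⟩ := isCompact_Icc.exists_isMinOn (nonempty_Icc.2 hL)
    ((continuous_const.dist continuous_id).comp_continuousOn hσ.lipschitzOnWith.continuousOn)
  obtain ⟨η, hη, hη0, hηm⟩ := hX (γx 0) (σ c)
  set m := dist (γx 0) (σ c)
  have hm : 0 ≤ m := dist_nonneg
  have hmin : ∀ t ∈ Icc 0 L, dist (η 0) (η m) ≤ dist (η 0) (σ t) := fun t ht => by
    rw [hη0, hηm]; exact hcmin ht
  have hηr : ∀ r ∈ Icc 0 m, dist (γx 0) (η r) = r := fun r hr => by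
    rw [← hη0, hη.dist_eq_sub ⟨le_rfl, hm⟩ hr hr.1, sub_zero]
  have hy := hMy.image_concat_subset_nbhd (τ := fun t => σ (c + t)) hm (sub_nonneg.2 hc.2) hη
    (hσ.comp (fun s t => by ring_nf) fun t ht => ⟨by linarith [hc.1, ht.1], by linarith [ht.2]⟩)
    (by simp [hηm]) (fun t ht => hmin _ ⟨by linarith [hc.1, ht.1], by linarith [ht.2]⟩)
    ⟨0, self_mem_Ici, hη0 ▸ hxy.symm⟩ ⟨n, hn, by simp [hσL]⟩
  have hx := hMx.image_concat_subset_nbhd (τ := fun t => σ (c - t)) hm hc.1 hη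
    (hσ.comp (fun s t => by rw [abs_sub_comm]; ring_nf) fun t ht =>
      ⟨by linarith [ht.2], by linarith [hc.2, ht.1]⟩)
    (by simp [hηm]) (fun t ht => hmin _ ⟨by linarith [ht.2], by linarith [hc.2, ht.1]⟩)
    ⟨0, self_mem_Ici, hη0.symm⟩ ⟨n, hn, by simp [hσ0]⟩
  -- otherwise `η R` would be `N 3 0`-close to both rays
  have hmR : m ≤ R := by
    by_contra! hRm
    have hRmem : η R ∈ η '' Icc 0 m := ⟨R, ⟨hR0, hRm.le⟩, rfl⟩
    obtain ⟨_, ⟨t, ht, rfl⟩, hty⟩ := hy (Or.inl hRmem)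
    have hxR := hγx.dist_le_of_mem_nbhd (hx (Or.inl hRmem))
    rw [hηr R ⟨hR0, hRm.le⟩] at hxR
    linarith [hR t ht, dist_triangle (γx R) (η R) (γy t)]
  have hn0 : dist (γx 0) (σ 0) = n := by
    rw [hσ0, hγx.dist_eq_sub self_mem_Ici hn hn, sub_zero]
  have hnL : dist (γx 0) (σ L) = n := by
    rw [hσL, hxy, hγy.dist_eq_sub self_mem_Ici hn hn, sub_zero]
  refine ⟨c, hmR, ?_, ?_, ?_⟩
  · linarith [dist_triangle (γx 0) (σ c) (σ 0), hσ.dist_eq_sub ⟨le_rfl, hL⟩ hc hc.1,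
      dist_comm (σ 0) (σ c)]
  · linarith [dist_triangle (γx 0) (σ c) (σ L), hσ.dist_eq_sub hc ⟨hL, le_rfl⟩ hc.2]
  · rintro _ ⟨t, ht, rfl⟩
    rcases le_total t c with htc | hct
    · refine nbhd_mono subset_union_left le_rfl (hx (Or.inr ⟨c - t, ⟨?_, ?_⟩, ?_⟩)) <;>
        simp [htc, ht.1]
    · refine nbhd_mono subset_union_right le_rfl (hy (Or.inr ⟨t - c, ⟨?_, ?_⟩, ?_⟩)) <;>
        simp [hct, ht.2]

lemma exists_subseq_tendstoUniformlyOn_of_lipschitzWith {Y : Type*} [MetricSpace Y]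
    [ProperSpace Y] [ProperSpace X] {K : ℝ≥0} {f : ℕ → Y → X} (hf : ∀ k, LipschitzWith K (f k))
    {y₀ : Y} {x₀ : X} {r : ℝ} (h₀ : ∀ k, dist (f k y₀) x₀ ≤ r) :
    ∃ φ : ℕ → ℕ, StrictMono φ ∧ ∃ g : Y → X,
      ∀ s, IsCompact s → TendstoUniformlyOn (fun k => f (φ k)) g atTop s := by
  let F : ℕ → C(Y, X) := fun k => ⟨f k, (hf k).continuous⟩
  have hF : IsCompact (closure (range F)) := by
    refine ArzelaAscoli.isCompact_closure_of_isClosedEmbedding (𝔖 := {s | IsCompact s})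
      (F := fun g : C(Y, X) => (g : Y → X))
      (fun _ hs => hs) ⟨ContinuousMap.isUniformEmbedding_toUniformOnFunIsCompact.isEmbedding, ?_⟩
      (fun s _ => ?_) fun _ _ y _ =>
        ⟨closedBall x₀ (r + K * dist y y₀), isCompact_closedBall _ _, ?_⟩
    · change IsClosed (range ContinuousMap.toUniformOnFunIsCompact)
      rw [ContinuousMap.range_toUniformOnFunIsCompact]
      exact UniformOnFun.isClosed_setOfPred_continuous CompactlyCoherentSpace.isCoherentWith
    · refine (LipschitzWith.uniformEquicontinuous _ K ?_).equicontinuous.equicontinuousOn s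
      rintro ⟨_, k, rfl⟩
      exact hf k
    · rintro _ ⟨k, rfl⟩
      show dist (f k y) x₀ ≤ _
      linarith [dist_triangle (f k y) (f k y₀) x₀, (hf k).dist_le_mul y y₀, h₀ k]
  obtain ⟨g, -, φ, hφ, hlim⟩ := hF.tendsto_subseq fun k => subset_closure (mem_range_self k)
  exact ⟨φ, hφ, g, ContinuousMap.tendsto_iff_forall_isCompact_tendstoUniformlyOn.1 hlim⟩

lemma exists_subseq_tendstoUniformlyOn_isGeodesicOn [ProperSpace X] {σ : ℕ → ℝ → X}
    (hσ : ∀ k : ℕ, IsGeodesicOn (σ k) (Icc (-k) k)) {x₀ : X} {r : ℝ}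
    (h₀ : ∀ k, dist (σ k 0) x₀ ≤ r) {A : Set X} (hA : IsClosed A)
    (hσA : ∀ k : ℕ, σ k '' Icc (-k) k ⊆ A) :
    ∃ φ : ℕ → ℕ, StrictMono φ ∧ ∃ γ : ℝ → X, IsGeodesicOn γ univ ∧ range γ ⊆ A ∧
      ∀ T, TendstoUniformlyOn (fun k => σ (φ k)) γ atTop (Icc (-T) T) := by
  have hk : ∀ k : ℕ, -(k : ℝ) ≤ k := fun k => neg_le_self (Nat.cast_nonneg k)
  -- clamping to `[-k, k]` gives `1`-Lipschitz maps defined on all of `ℝ`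
  set f : ℕ → ℝ → X := fun k s => σ k (projIcc (-(k : ℝ)) k (hk k) s)
  have hfσ : ∀ (k : ℕ) (s : ℝ), |s| ≤ k → f k s = σ k s := fun k s hs => by
    simp [f, projIcc_of_mem (hk k) (abs_le.1 hs)]
  obtain ⟨φ, hφ, γ, hγ⟩ := exists_subseq_tendstoUniformlyOn_of_lipschitzWith
    (fun k => (hσ k).lipschitzWith_projIcc (hk k)) (y₀ := 0)
    fun k => (hfσ k 0 (by simp)).symm ▸ h₀ k
  have hφT : ∀ T : ℝ, ∀ᶠ k in atTop, T ≤ φ k := fun T =>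
    (tendsto_natCast_atTop_atTop.comp hφ.tendsto_atTop).eventually_ge_atTop T
  have hconv : ∀ T, TendstoUniformlyOn (fun k => σ (φ k)) γ atTop (Icc (-T) T) := fun T =>
    (hγ _ isCompact_Icc).congr <| (hφT T).mono fun k hk s hs =>
      hfσ _ s ((abs_le.2 hs).trans hk)
  have hpt : ∀ s, Tendsto (fun k => σ (φ k) s) atTop (𝓝 (γ s)) := fun s =>
    (hconv |s|).tendsto_at (abs_le.1 le_rfl)
  refine ⟨φ, hφ, γ, fun s _ t _ => ?_, ?_, hconv⟩
  · refine tendsto_nhds_unique ((hpt s).dist (hpt t)) (tendsto_const_nhds.congr' ?_)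
    filter_upwards [hφT |s|, hφT |t|] with k hks hkt
    exact ((hσ _) s (abs_le.1 hks) t (abs_le.1 hkt)).symm
  · rintro _ ⟨s, rfl⟩
    exact hA.mem_of_tendsto (hpt s) <| (hφT |s|).mono fun k hk => hσA _ ⟨s, abs_le.1 hk, rfl⟩

end

/-- the geodesics joining points escaping along two diverging N-Morse rays
subconverge (uniformly on compact sets, after reparameterization) to a biinfinite geodesic
lying in the 4·N(3,0)-neighborhood of the union of the rays. -/
theorem stmt4 {X : Type*} [MetricSpace X] [ProperSpace X] (hX : GeodesicSpace X)
    (N : ℝ → ℝ → ℝ) (hN : MorseGauge N) (e : X)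
    (γx γy : ℝ → X)
    (hγx : IsGeodesicOn γx (Ici 0)) (hγy : IsGeodesicOn γy (Ici 0))
    (hMx : IsMorseOn N γx (Ici 0)) (hMy : IsMorseOn N γy (Ici 0))
    (hx0 : γx 0 = e) (hy0 : γy 0 = e)
    (R : ℕ) (hR : ∀ t : ℝ, 0 ≤ t → 4 * N 3 0 < dist (γx (R : ℝ)) (γy t))
    (γn : ℕ → ℝ → X) (L : ℕ → ℝ) (hLd : ∀ n : ℕ, L n = dist (γx (n : ℝ)) (γy (n : ℝ)))
    (hgn : ∀ n : ℕ, R < n →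
      IsGeodesicOn (γn n) (Icc 0 (L n)) ∧ γn n 0 = γx (n : ℝ) ∧ γn n (L n) = γy (n : ℝ)) :
    ∃ φ : ℕ → ℕ, StrictMono φ ∧ (∀ k, R < φ k) ∧
      ∃ (c : ℕ → ℝ) (γ : ℝ → X), IsGeodesicOn γ univ ∧
        (∀ T > (0:ℝ), ∀ ε > (0:ℝ), ∃ k₀ : ℕ, ∀ k ≥ k₀,
          Icc (c k - T) (c k + T) ⊆ Icc 0 (L (φ k)) ∧
          ∀ s ∈ Icc (-T) T, dist (γn (φ k) (s + c k)) (γ s) ≤ ε) ∧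
        γ '' univ ⊆ nbhd (γx '' Ici 0 ∪ γy '' Ici 0) (4 * N 3 0) := by
  have hD : 0 ≤ N 3 0 := hN 3 0 (by norm_num) le_rfl
  set A := γx '' Ici 0 ∪ γy '' Ici 0
  have hcenter : ∀ n : ℕ, R < n → ∃ c, dist e (γn n c) ≤ R ∧ (n : ℝ) - R ≤ c ∧
      (n : ℝ) - R ≤ L n - c ∧ γn n '' Icc 0 (L n) ⊆ nbhd A (N 3 0) := fun n hn => by
    obtain ⟨hσ, hσ0, hσL⟩ := hgn n hn
    simpa only [hx0] using exists_center_of_diverging_isMorseOn hX hγx hγy hMx hMy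
      (hx0.trans hy0.symm) R.cast_nonneg (fun t ht => by linarith [hR t ht]) n.cast_nonneg
      (hLd n ▸ dist_nonneg) hσ hσ0 hσL
  choose! c hce hcn hcL hcA using hcenter
  -- the geodesic with index `k + R + 1`, recentered at `c`, is defined on `[-k, k]`
  set ν : ℕ → ℕ := fun k => k + R + 1
  have hν : ∀ k, R < ν k := fun k => by simp only [ν]; omega
  have hdom : ∀ (k : ℕ) (T : ℝ), T ≤ k → Icc (c (ν k) - T) (c (ν k) + T) ⊆ Icc 0 (L (ν k)) := by
    intro k T hT x hx
    have : (k : ℝ) + 1 = ν k - R := by push_cast [ν]; ring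
    constructor <;> linarith [hx.1, hx.2, hcn _ (hν k), hcL _ (hν k)]
  have hshift : ∀ (k : ℕ) (T : ℝ), T ≤ k → MapsTo (· + c (ν k)) (Icc (-T) T) (Icc 0 (L (ν k))) :=
    fun k T hT s hs => hdom k T hT ⟨by linarith [hs.1], by linarith [hs.2]⟩
  obtain ⟨ψ, hψ, γ, hγ, hγA, hconv⟩ := exists_subseq_tendstoUniformlyOn_isGeodesicOn
    (σ := fun k s => γn (ν k) (s + c (ν k))) (x₀ := e) (r := R)
    (fun k => (hgn _ (hν k)).1.comp (fun s t => by ring_nf) (hshift k k le_rfl))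
    (fun k => by simpa [dist_comm] using hce _ (hν k))
    (((hγx.isClosed_image isClosed_Ici).union (hγy.isClosed_image isClosed_Ici)).nbhd _)
    (fun k => by
      rintro _ ⟨s, hs, rfl⟩
      exact hcA _ (hν k) ⟨_, hshift k k le_rfl hs, rfl⟩)
  refine ⟨ν ∘ ψ, StrictMono.comp (fun a b hab => by simp only [ν]; omega) hψ, fun k => hν _,
    fun k => c (ν (ψ k)), γ, hγ, fun T hT ε hε => ?_, ?_⟩
  · obtain ⟨k₀, hk₀⟩ := eventually_atTop.1 <|
      (Metric.tendstoUniformlyOn_iff.1 (hconv T) ε hε).and (eventually_ge_atTop ⌈T⌉₊)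
    refine ⟨k₀, fun k hk => ⟨hdom _ T ?_, fun s hs => ?_⟩⟩
    · exact (Nat.le_ceil T).trans (Nat.cast_le.2 ((hk₀ k hk).2.trans (hψ.id_le k)))
    · rw [dist_comm]
      exact ((hk₀ k hk).1 s hs).le
  · rw [image_univ]
    exact hγA.trans (nbhd_mono subset_rfl (by linarith))
end

section
/- Let X be a geodesic metric space, γ' an N'-Morse geodesic with endpoints x'', y'', and let x, y ∈ X with d(x, x'') ≤ D and d(y, y'') ≤ D. Then there exists a Morse gauge N'' depending only on N' and D such that any geodesic [x,y] from x to y is N''-Morse. -/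
/-! Gluing geodesics of length at most `D` from `γ' a` to `x` and from `y` to `γ' b` onto
`[x, y]` gives a `(1, 4D)`-quasigeodesic with endpoints on `γ'`, so `[x, y]` lies in the
`M`-neighbourhood of `γ'`, `M = N'(1, 4D)`; by continuity `γ'` in turn lies in a bounded
neighbourhood of `[x, y]`. A `(K, C)`-quasigeodesic with endpoints on `[x, y]` is extended in the
same way, by geodesics of length at most `M`, to a `(K, C + 4M)`-quasigeodesic with endpoints on
`γ'`; it therefore stays `N'(K, C + 4M)`-close to `γ'`, hence close to `[x, y]`. -/

open Set Metric Filter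

variable {X : Type*}

/-- `g₁` on `[0, d₁]`, then `q` on `[m₁, m₂]`, then `g₂` on `[0, d₂]`, glued into one path
on `[m₁ - d₁, m₂ + d₂]`. -/
noncomputable def joinEnds (g₁ : ℝ → X) (d₁ : ℝ) (q : ℝ → X) (m₁ m₂ : ℝ) (g₂ : ℝ → X) (r : ℝ) : X :=
  if r < m₁ then g₁ (r - m₁ + d₁) else if r ≤ m₂ then q r else g₂ (r - m₂)

section

variable {g₁ g₂ q : ℝ → X} {d₁ d₂ m₁ m₂ : ℝ}

theorem joinEnds_of_mem {r : ℝ} (hr : r ∈ Icc m₁ m₂) : joinEnds g₁ d₁ q m₁ m₂ g₂ r = q r := by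
  rw [joinEnds, if_neg (not_lt.2 hr.1), if_pos hr.2]

theorem joinEnds_left (hm : m₁ ≤ m₂) (hd₁ : 0 ≤ d₁) (hj₁ : g₁ d₁ = q m₁) :
    joinEnds g₁ d₁ q m₁ m₂ g₂ (m₁ - d₁) = g₁ 0 := by
  rcases hd₁.eq_or_lt with rfl | hd₁
  · rw [sub_zero, joinEnds_of_mem ⟨le_rfl, hm⟩, hj₁]
  · rw [joinEnds, if_pos (by linarith)]
    ring_nf

theorem joinEnds_right (hm : m₁ ≤ m₂) (hd₂ : 0 ≤ d₂) (hj₂ : g₂ 0 = q m₂) :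
    joinEnds g₁ d₁ q m₁ m₂ g₂ (m₂ + d₂) = g₂ d₂ := by
  rcases hd₂.eq_or_lt with rfl | hd₂
  · rw [add_zero, joinEnds_of_mem ⟨hm, le_rfl⟩, hj₂]
  · rw [joinEnds, if_neg (by linarith), if_neg (by linarith)]
    ring_nf

end

variable [MetricSpace X]

theorem IsGeodesicOn.dist_eq_sub_s10 {γ : ℝ → X} {I : Set ℝ} (hγ : IsGeodesicOn γ I) {s t : ℝ}
    (hs : s ∈ I) (ht : t ∈ I) (hst : s ≤ t) : dist (γ t) (γ s) = t - s := by
  rw [hγ t ht s hs, abs_of_nonneg (sub_nonneg.2 hst)]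

theorem IsGeodesicOn.lipschitzOnWith_s10 {γ : ℝ → X} {I : Set ℝ} (hγ : IsGeodesicOn γ I) :
    LipschitzOnWith 1 γ I :=
  LipschitzOnWith.of_dist_le_mul fun s hs t ht => by
    rw [hγ s hs t ht, NNReal.coe_one, one_mul, Real.dist_eq]

theorem IsGeodesicOn.isQuasigeodesicOn {γ : ℝ → X} {I : Set ℝ} (hγ : IsGeodesicOn γ I) :
    IsQuasigeodesicOn 1 0 γ I := fun s hs t ht => by
  rw [hγ s hs t ht]
  constructor <;> simp

theorem subset_nbhd_trans {A B C : Set X} {r s : ℝ} (hAB : A ⊆ nbhd B r) (hBC : B ⊆ nbhd C s) :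
    A ⊆ nbhd C (r + s) := by
  intro x hx
  obtain ⟨y, hy, hxy⟩ := hAB hx
  obtain ⟨z, hz, hyz⟩ := hBC hy
  exact ⟨z, hz, (dist_triangle x y z).trans (add_le_add hxy hyz)⟩

theorem IsQuasigeodesicOn.of_dist_le_comp {K C M : ℝ} {q Φ : ℝ → X} {c : ℝ → ℝ} {I J : Set ℝ}
    (hq : IsQuasigeodesicOn K C q J) (hK : 1 ≤ K) (hcJ : ∀ r ∈ I, c r ∈ J)
    (hc : ∀ s ∈ I, ∀ t ∈ I, |c s - c t| ≤ |s - t|) (hcM : ∀ r ∈ I, |r - c r| ≤ M)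
    (hΦ : ∀ r ∈ I, dist (Φ r) (q (c r)) ≤ M) :
    IsQuasigeodesicOn K (C + 4 * M) Φ I := by
  intro s hs t ht
  have hM : 0 ≤ M := dist_nonneg.trans (hΦ s hs)
  obtain ⟨hlow, hup⟩ := hq (c s) (hcJ s hs) (c t) (hcJ t ht)
  have hΦs := hΦ s hs
  have hΦt := hΦ t ht
  have hfar : dist (q (c s)) (q (c t)) ≤ M + dist (Φ s) (Φ t) + M := by
    have := dist_triangle4 (q (c s)) (Φ s) (Φ t) (q (c t))
    rw [dist_comm (q (c s)) (Φ s)] at this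
    linarith
  have hnear : dist (Φ s) (Φ t) ≤ M + dist (q (c s)) (q (c t)) + M := by
    have := dist_triangle4 (Φ s) (q (c s)) (q (c t)) (Φ t)
    rw [dist_comm (q (c t)) (Φ t)] at this
    linarith
  have hst : |s - t| ≤ |c s - c t| + 2 * M := by
    have := abs_sub_le s (c s) t
    have := abs_sub_le (c s) (c t) t
    rw [abs_sub_comm (c t)] at this
    linarith [hcM s hs, hcM t ht]
  have hK' : 0 < 1 / K := by positivity
  have hK1 : 1 / K ≤ 1 := by rw [div_le_one (by linarith)]; exact hK
  have hscale : 1 / K * |s - t| ≤ 1 / K * |c s - c t| + 2 * M := by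
    have := mul_le_mul_of_nonneg_left hst hK'.le
    have := mul_le_of_le_one_left (by positivity : (0 : ℝ) ≤ 2 * M) hK1
    linarith
  constructor
  · linarith
  · linarith [mul_le_mul_of_nonneg_left (hc s hs t ht) (by linarith : (0 : ℝ) ≤ K)]

section joinEnds

variable {g₁ g₂ q : ℝ → X} {d₁ d₂ m₁ m₂ : ℝ}

theorem dist_joinEnds_projIcc (hm : m₁ ≤ m₂) (hg₁ : IsGeodesicOn g₁ (Icc 0 d₁))
    (hg₂ : IsGeodesicOn g₂ (Icc 0 d₂)) (hj₁ : g₁ d₁ = q m₁) (hj₂ : g₂ 0 = q m₂) {r : ℝ}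
    (hr : r ∈ Icc (m₁ - d₁) (m₂ + d₂)) :
    dist (joinEnds g₁ d₁ q m₁ m₂ g₂ r) (q (projIcc m₁ m₂ hm r)) = |r - projIcc m₁ m₂ hm r| := by
  rcases lt_or_ge r m₁ with h₁ | h₁
  · rw [projIcc_of_le_left hm h₁.le, joinEnds, if_pos h₁, ← hj₁,
      hg₁ _ ⟨by linarith [hr.1], by linarith⟩ _ ⟨by linarith [hr.1], le_rfl⟩]
    ring_nf
  rcases le_or_gt r m₂ with h₂ | h₂
  · rw [projIcc_of_mem hm ⟨h₁, h₂⟩, joinEnds_of_mem ⟨h₁, h₂⟩]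
    simp
  · rw [projIcc_of_right_le hm h₂.le, joinEnds, if_neg (not_lt.2 h₁), if_neg (not_le.2 h₂),
      ← hj₂, hg₂ _ ⟨by linarith, by linarith [hr.2]⟩ _ ⟨le_rfl, by linarith [hr.2]⟩, sub_zero]

theorem isQuasigeodesicOn_joinEnds {K C M : ℝ} (hK : 1 ≤ K) (hm : m₁ ≤ m₂)
    (hq : IsQuasigeodesicOn K C q (Icc m₁ m₂)) (hM : 0 ≤ M) (hd₁ : d₁ ≤ M) (hd₂ : d₂ ≤ M)
    (hg₁ : IsGeodesicOn g₁ (Icc 0 d₁)) (hg₂ : IsGeodesicOn g₂ (Icc 0 d₂))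
    (hj₁ : g₁ d₁ = q m₁) (hj₂ : g₂ 0 = q m₂) :
    IsQuasigeodesicOn K (C + 4 * M) (joinEnds g₁ d₁ q m₁ m₂ g₂) (Icc (m₁ - d₁) (m₂ + d₂)) := by
  have hshift : ∀ r ∈ Icc (m₁ - d₁) (m₂ + d₂), |r - projIcc m₁ m₂ hm r| ≤ M := by
    intro r hr
    rcases lt_or_ge r m₁ with h₁ | h₁
    · rw [projIcc_of_le_left hm h₁.le, abs_of_neg (by simpa using h₁)]
      linarith [hr.1]
    rcases le_or_gt r m₂ with h₂ | h₂
    · rwa [projIcc_of_mem hm ⟨h₁, h₂⟩, sub_self, abs_zero]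
    · rw [projIcc_of_right_le hm h₂.le, abs_of_pos (by simpa using h₂)]
      linarith [hr.2]
  refine hq.of_dist_le_comp hK (fun r _ => (projIcc m₁ m₂ hm r).2)
    (fun s _ t _ => abs_projIcc_sub_projIcc hm) hshift fun r hr => ?_
  rw [dist_joinEnds_projIcc hm hg₁ hg₂ hj₁ hj₂ hr]
  exact hshift r hr

end joinEnds

/-- Joining the endpoints of `q` to the path by geodesics of length at most `M` gives a
`(K, C + 4M)`-quasigeodesic with endpoints on the path. -/
theorem IsMorseOn.image_subset_nbhd_of_mem_nbhd (hX : GeodesicSpace X) {N : ℝ → ℝ → ℝ}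
    {γ : ℝ → X} {I : Set ℝ} (hγ : IsMorseOn N γ I) {K C M : ℝ} (hK : 1 ≤ K) (hC : 0 ≤ C)
    {q : ℝ → X} {a b : ℝ} (hab : a ≤ b) (hq : IsQuasigeodesicOn K C q (Icc a b))
    (ha : q a ∈ nbhd (γ '' I) M) (hb : q b ∈ nbhd (γ '' I) M) :
    q '' Icc a b ⊆ nbhd (γ '' I) (N K (C + 4 * M)) := by
  obtain ⟨p₁, hp₁, hap₁⟩ := ha
  obtain ⟨p₂, hp₂, hbp₂⟩ := hb
  obtain ⟨g₁, hg₁, hg₁0, hg₁1⟩ := hX p₁ (q a)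
  obtain ⟨g₂, hg₂, hg₂0, hg₂1⟩ := hX (q b) p₂
  set d₁ := dist p₁ (q a)
  set d₂ := dist (q b) p₂
  have hd₁ : 0 ≤ d₁ := dist_nonneg
  have hd₂ : 0 ≤ d₂ := dist_nonneg
  have hM : 0 ≤ M := hd₂.trans hbp₂
  have hΦ := isQuasigeodesicOn_joinEnds hK hab hq hM ((dist_comm _ _).trans_le hap₁) hbp₂ hg₁ hg₂
    hg₁1 hg₂0
  have hnbhd := hγ K (C + 4 * M) hK (by positivity) _ _ _ (by linarith) hΦ
    (by rwa [joinEnds_left hab hd₁ hg₁1, hg₁0]) (by rwa [joinEnds_right hab hd₂ hg₂0, hg₂1])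
  rintro _ ⟨r, hr, rfl⟩
  rw [← joinEnds_of_mem (g₁ := g₁) (d₁ := d₁) (q := q) (g₂ := g₂) hr]
  exact hnbhd ⟨r, ⟨by linarith [hr.1], by linarith [hr.2]⟩, rfl⟩

/-- A point `γ w` away from the ends is matched with a point `σ s` at the same distance `w - a`
from `γ a` (intermediate value theorem); a point of `γ` within `M` of `σ s` is then within `M`
of `γ w` along `γ`. -/
theorem IsGeodesicOn.image_subset_nbhd_of_image_subset_nbhd {γ σ : ℝ → X} {a b s₀ s₁ M D : ℝ}
    (hγ : IsGeodesicOn γ (Icc a b)) (hab : a ≤ b) (hs : s₀ ≤ s₁)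
    (hσ : ContinuousOn σ (Icc s₀ s₁)) (hnear : σ '' Icc s₀ s₁ ⊆ nbhd (γ '' Icc a b) M)
    (h₀ : dist (σ s₀) (γ a) ≤ D) (h₁ : dist (σ s₁) (γ b) ≤ D) :
    γ '' Icc a b ⊆ nbhd (σ '' Icc s₀ s₁) (2 * max M D) := by
  rintro _ ⟨w, hw, rfl⟩
  have hwa := hγ.dist_eq_sub_s10 ⟨le_rfl, hab⟩ hw hw.1
  have hbw := hγ.dist_eq_sub_s10 hw ⟨hab, le_rfl⟩ hw.2
  have hMD := le_max_left M D
  have hDM := le_max_right M D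
  rcases lt_or_ge (w - a) (dist (σ s₀) (γ a)) with hlo | hlo
  · refine ⟨σ s₀, mem_image_of_mem σ ⟨le_rfl, hs⟩, ?_⟩
    linarith [dist_triangle (γ w) (γ a) (σ s₀), dist_comm (γ a) (σ s₀)]
  rcases le_or_gt (w - a) (dist (σ s₁) (γ a)) with hhi | hhi
  · obtain ⟨s, hs, hsw : dist (σ s) (γ a) = w - a⟩ := intermediate_value_Icc hs
      ((continuous_id.dist continuous_const).comp_continuousOn hσ) ⟨hlo, hhi⟩
    obtain ⟨_, ⟨u, hu, rfl⟩, hsu⟩ := hnear ⟨s, hs, rfl⟩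
    have hua := hγ.dist_eq_sub_s10 ⟨le_rfl, hab⟩ hu hu.1
    have hwu : |w - u| ≤ M := by
      have := abs_dist_sub_le (σ s) (γ u) (γ a)
      rw [hsw, hua, show w - a - (u - a) = w - u by ring] at this
      exact this.trans hsu
    refine ⟨σ s, mem_image_of_mem σ hs, ?_⟩
    linarith [dist_triangle (γ w) (γ u) (σ s), hγ w hw u hu, dist_comm (γ u) (σ s)]
  · refine ⟨σ s₁, mem_image_of_mem σ ⟨hs, le_rfl⟩, ?_⟩
    have hba := hγ.dist_eq_sub_s10 ⟨le_rfl, hab⟩ ⟨hab, le_rfl⟩ hab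
    linarith [dist_triangle (γ w) (γ b) (σ s₁), dist_triangle (γ b) (σ s₁) (γ a),
      dist_comm (γ b) (σ s₁), dist_comm (γ w) (γ b)]

/-- moving the endpoints of an N'-Morse geodesic a distance at most D
yields uniformly Morse geodesics: there is a gauge N'' = N''(N',D) such that any geodesic
between the moved endpoints is N''-Morse. -/
theorem stmt10 (N' : ℝ → ℝ → ℝ) (hN' : MorseGauge N') (D : ℝ) (hD : 0 ≤ D) :
    ∃ N'' : ℝ → ℝ → ℝ, MorseGauge N'' ∧
      ∀ (X : Type) [MetricSpace X], GeodesicSpace X →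
      ∀ (γ' : ℝ → X) (a b : ℝ), a ≤ b →
        IsGeodesicOn γ' (Icc a b) → IsMorseOn N' γ' (Icc a b) →
      ∀ x y : X, dist x (γ' a) ≤ D → dist y (γ' b) ≤ D →
      ∀ (σ : ℝ → X) (L : ℝ), L = dist x y →
        IsGeodesicOn σ (Icc 0 L) → σ 0 = x → σ L = y →
        IsMorseOn N'' σ (Icc 0 L) := by
  set M := N' 1 (4 * D)
  have hM : 0 ≤ M := hN' 1 _ le_rfl (by positivity)
  refine ⟨fun K C => N' K (C + 4 * M) + 2 * max M D,
    fun K C hK hC => add_nonneg (hN' K _ hK (by positivity)) (by positivity), ?_⟩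
  intro X _ hX γ' a b hab hγ' hMorse x y hx hy σ L hL hσ hσ0 hσL
  subst hσ0 hσL
  have hL : 0 ≤ L := hL ▸ dist_nonneg
  have hx' : σ 0 ∈ nbhd (γ' '' Icc a b) D := ⟨γ' a, mem_image_of_mem γ' ⟨le_rfl, hab⟩, hx⟩
  have hy' : σ L ∈ nbhd (γ' '' Icc a b) D := ⟨γ' b, mem_image_of_mem γ' ⟨hab, le_rfl⟩, hy⟩
  have hnear : σ '' Icc 0 L ⊆ nbhd (γ' '' Icc a b) M := by
    simpa only [zero_add] using
      hMorse.image_subset_nbhd_of_mem_nbhd hX le_rfl le_rfl hL hσ.isQuasigeodesicOn hx' hy'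
  have hback := hγ'.image_subset_nbhd_of_image_subset_nbhd hab hL
    hσ.lipschitzOnWith_s10.continuousOn hnear hx hy
  intro K C hK hC q a₀ b₀ hab₀ hq hqa hqb
  exact subset_nbhd_trans
    (hMorse.image_subset_nbhd_of_mem_nbhd hX hK hC hab₀ hq (hnear hqa) (hnear hqb)) hback
end
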